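/- For a reaction network satisfying Assumptions 1 and 2, if a monomial u·∏_{i=1}^M z_i with M ≥ 1, where U is an intermediate species and X and all the Z_i are non-intermediate species, appears in x^{(ℓ)} for some ℓ ≥ 1, then either there exist 1 ≤ i_1 < i_2 ≤ M such that Z_{i_1} reacts with Z_{i_2}, or there exist 1 ≤ i_0 ≤ M and a non-intermediate species V that reacts with Z_{i_0} such that U reacts to a complex containing V. -/

import Mathlib

open MvPolynomial Finsupp

variable {σ : Type*}

/-- The total (Lie) derivative of a polynomial `φ` associated to the polynomial vector
field `f`: `φ̇ = Σ_x (∂φ/∂x)·f x`. -/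
noncomputable def lieD [Fintype σ] (f : σ → MvPolynomial σ ℝ)
    (φ : MvPolynomial σ ℝ) : MvPolynomial σ ℝ :=
  ∑ x : σ, MvPolynomial.pderiv x φ * f x

/-- Iterated total (Lie) derivative. -/
noncomputable def lieDIter [Fintype σ] (f : σ → MvPolynomial σ ℝ) :
    ℕ → MvPolynomial σ ℝ → MvPolynomial σ ℝ
  | 0, φ => φ
  | n + 1, φ => lieD f (lieDIter f n φ)

/-- Indicator of a species inside a complex, as a real number. -/
def ind [DecidableEq σ] (a x : σ) : ℝ := if a = x then 1 else 0

/-- A chemical reaction network of the structural form of Assumption 1: the connected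
components are indexed by `ι`; component `i` is
`Y i + S i 0 ⇄ U i 1 → Y i + S i 1 ⇄ U i 2 → ⋯ ⇄ U i (L i) → Y i + S i (L i)`,
with rate constants `a_{i,j}, b_{i,j}, c_{i,j}` for the reactions
`Y i + S i (j-1) → U i j`, `U i j → Y i + S i (j-1)`, `U i j → Y i + S i j`
(`1 ≤ j ≤ L i`). Only the values `S i j` for `j ≤ L i` and `U i j` for
`1 ≤ j ≤ L i` are relevant. -/
structure A1Network (σ : Type*) where
  ι : Type
  [fintypeι : Fintype ι]
  L : ι → ℕ
  Lpos : ∀ i, 1 ≤ L i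
  Y : ι → σ
  S : ι → ℕ → σ
  U : ι → ℕ → σ

attribute [instance] A1Network.fintypeι

namespace A1Network

variable [Fintype σ] [DecidableEq σ]

/-- Rate-constant index: component `i`, block `j+1` (for `j : Fin (L i)`), and
`0, 1, 2` for the constants `a, b, c` of the block. -/
def Param (N : A1Network σ) : Type := (i : N.ι) × Fin (N.L i) × Fin 3

instance (N : A1Network σ) : Fintype N.Param :=
  inferInstanceAs (Fintype ((i : N.ι) × Fin (N.L i) × Fin 3))

/-- `x` is an intermediate species of the network. -/
def inter (N : A1Network σ) (x : σ) : Prop :=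
  ∃ i, ∃ j : Fin (N.L i), x = N.U i ((j : ℕ) + 1)

/-- The non-intermediate `x₁` reacts with the non-intermediate `x₂`
(a reaction `x₁ + x₂ → U` exists). -/
def reactsWith (N : A1Network σ) (x₁ x₂ : σ) : Prop :=
  ∃ i, ∃ j : Fin (N.L i),
    (x₁ = N.Y i ∧ x₂ = N.S i (j : ℕ)) ∨ (x₂ = N.Y i ∧ x₁ = N.S i (j : ℕ))

/-- The intermediate `u` reacts to the non-intermediate `x`
(a reaction `u → x + X₂` exists). -/
def reactsTo (N : A1Network σ) (u x : σ) : Prop :=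
  ∃ i, ∃ j : Fin (N.L i), u = N.U i ((j : ℕ) + 1) ∧
    (x = N.Y i ∨ x = N.S i (j : ℕ) ∨ x = N.S i ((j : ℕ) + 1))

/-- The distinctness/uniqueness requirements of Assumption 1: the intermediates of the
entire network are pairwise distinct and distinct from all non-intermediates; the
non-intermediates of one component are pairwise distinct; each complex lies in a
unique connected component. -/
structure Assumption1 (N : A1Network σ) : Prop where
  U_inj : ∀ i (j : Fin (N.L i)) i' (j' : Fin (N.L i')),
    N.U i ((j : ℕ) + 1) = N.U i' ((j' : ℕ) + 1) → i = i' ∧ (j : ℕ) = (j' : ℕ)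
  U_ne_Y : ∀ i (j : Fin (N.L i)) i', N.U i ((j : ℕ) + 1) ≠ N.Y i'
  U_ne_S : ∀ i (j : Fin (N.L i)) i' j', j' ≤ N.L i' → N.U i ((j : ℕ) + 1) ≠ N.S i' j'
  S_inj : ∀ i j j', j ≤ N.L i → j' ≤ N.L i → N.S i j = N.S i j' → j = j'
  complex_unique : ∀ i i' j j', j ≤ N.L i → j' ≤ N.L i' →
    (∀ x : σ, ind (N.Y i) x + ind (N.S i j) x = ind (N.Y i') x + ind (N.S i' j') x) →
    i = i'

/-- `part` is a partition of the species as in Assumption 2: intermediates form class `0`;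
all the substrates and products of a component lie in one class `α ≥ 1` which contains
neither the enzyme of the component nor any intermediate. -/
def IsPartition (N : A1Network σ) (part : σ → ℕ) : Prop :=
  (∀ x, N.inter x → part x = 0) ∧
  (∀ i : N.ι, ∃ α, 1 ≤ α ∧ (∀ j, j ≤ N.L i → part (N.S i j) = α) ∧
    part (N.Y i) ≠ α ∧ part (N.Y i) ≠ 0)

/-- Assumption 2: there exists a partition as above. -/
def Assumption2 (N : A1Network σ) : Prop := ∃ part, N.IsPartition part

/-- The mass-action right-hand side of the induced dynamical system:
`ẋ = Σ_{y→y'} k_{yy'} x^y (y'-y)`. -/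
noncomputable def rhs (N : A1Network σ) (k : N.Param → ℝ) (x : σ) : MvPolynomial σ ℝ :=
  ∑ i : N.ι, ∑ j : Fin (N.L i),
    (C (k ⟨i, j, 0⟩ *
          (ind (N.U i ((j : ℕ) + 1)) x - ind (N.Y i) x - ind (N.S i (j : ℕ)) x)) *
        (X (N.Y i) * X (N.S i (j : ℕ)))
      + C (k ⟨i, j, 1⟩ *
          (ind (N.Y i) x + ind (N.S i (j : ℕ)) x - ind (N.U i ((j : ℕ) + 1)) x)) *
        X (N.U i ((j : ℕ) + 1))
      + C (k ⟨i, j, 2⟩ *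
          (ind (N.Y i) x + ind (N.S i ((j : ℕ) + 1)) x - ind (N.U i ((j : ℕ) + 1)) x)) *
        X (N.U i ((j : ℕ) + 1)))

/-- `x^{(ℓ)}(x, k)`: the `ℓ`-th iterated total derivative of the variable `x`. -/
noncomputable def deriv (N : A1Network σ) (k : N.Param → ℝ) (ℓ : ℕ) (x : σ) :
    MvPolynomial σ ℝ :=
  lieDIter (N.rhs k) ℓ (X x)

/-- The map `ψ` on rate constants is identifiable from the set of variables `T` with `D`
derivatives: whenever two positive rate vectors give the same derivatives
`x^{(ℓ)}`, `1 ≤ ℓ ≤ D`, `x ∈ T`, as polynomials, the values of `ψ` agree. -/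
def IdentifiableFrom {α : Type*} (N : A1Network σ) (ψ : (N.Param → ℝ) → α)
    (T : Set σ) (D : ℕ) : Prop :=
  ∀ k₁ k₂ : N.Param → ℝ, (∀ r, 0 < k₁ r) → (∀ r, 0 < k₂ r) →
    (∀ x ∈ T, ∀ ℓ, 1 ≤ ℓ → ℓ ≤ D → N.deriv k₁ ℓ x = N.deriv k₂ ℓ x) →
    ψ k₁ = ψ k₂

/-
Write the monomial as `m = u + z₁ + ⋯ + z_M`. Since `x^{(ℓ+1)} = Σ_w ∂_w x^{(ℓ)} · ẇ` and
every monomial of a right-hand side `ẇ` is either a reactant pair `Y + S` or a single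
intermediate `U` (the latter only when `w` is `U` or a species `U` reacts to), `m` arises
either from a pair `Y + S` inside `m`, necessarily two of the `zᵢ`, or from `m - u + w` in
`x^{(ℓ)}` with `U = u`. If `w = u` we recurse. Otherwise `u` reacts to `w`, and
`w + z₁ + ⋯ + z_M` contains no intermediate, so it can only arise from a reactant pair,
relating either two `zᵢ` or `w` and some `z_{i₀}`. The recursion cannot reach `x^{(0)} = x`,
whose only monomial has degree `1 < M + 1`.
-/

end A1Network

open Finset in
theorem exists_of_coeff_lieD_ne_zero [Fintype σ] {f : σ → MvPolynomial σ ℝ}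
    {φ : MvPolynomial σ ℝ} {m : σ →₀ ℕ} (h : coeff m (lieD f φ) ≠ 0) :
    ∃ (w : σ) (d n : σ →₀ ℕ),
      coeff (d + single w 1) φ ≠ 0 ∧ coeff n (f w) ≠ 0 ∧ m = d + n := by
  classical
  rw [lieD, coeff_sum] at h
  obtain ⟨w, -, hw⟩ := exists_ne_zero_of_sum_ne_zero h
  rw [coeff_mul] at hw
  obtain ⟨⟨d, n⟩, hdn, hne⟩ := exists_ne_zero_of_sum_ne_zero hw
  rw [coeff_pderiv] at hne
  exact ⟨w, d, n, left_ne_zero_of_mul (left_ne_zero_of_mul hne), right_ne_zero_of_mul hne,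
    (mem_antidiagonal.mp hdn).symm⟩

theorem eq_or_exists_of_single_add_sum_apply_ne_zero {ι : Type*} [Fintype ι] {a s : σ}
    {z : ι → σ} (h : (single a 1 + ∑ i, single (z i) 1 : σ →₀ ℕ) s ≠ 0) :
    s = a ∨ ∃ i, z i = s := by
  classical
  contrapose! h
  simp [Ne.symm h.1, h.2]

theorem coeff_single_add_sum_X {R ι : Type*} [CommSemiring R] [Fintype ι] [Nonempty ι]
    (a x : σ) (z : ι → σ) :
    coeff (single a 1 + ∑ i, single (z i) 1) (X x : MvPolynomial σ R) = 0 := by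
  classical
  rw [coeff_X, if_neg]
  intro h
  have := congrArg Finsupp.degree h
  simp [map_sum] at this

namespace A1Network

section

variable {N : A1Network σ}

theorem reactsWith_comm {a b : σ} (h : N.reactsWith a b) : N.reactsWith b a := by
  obtain ⟨i, j, h | h⟩ := h
  exacts [⟨i, j, .inr h⟩, ⟨i, j, .inl h⟩]

theorem Assumption2.not_inter_Y (h : N.Assumption2) (i : N.ι) : ¬ N.inter (N.Y i) := by
  obtain ⟨part, h_inter, h_comp⟩ := h
  obtain ⟨α, -, -, -, hY⟩ := h_comp i
  exact fun hi ↦ hY (h_inter _ hi)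

theorem Assumption2.not_inter_S (h : N.Assumption2) {i : N.ι} {j : ℕ} (hj : j ≤ N.L i) :
    ¬ N.inter (N.S i j) := by
  obtain ⟨part, h_inter, h_comp⟩ := h
  obtain ⟨α, hα, hS, -, -⟩ := h_comp i
  intro hi
  have := h_inter _ hi
  rw [hS j hj] at this
  omega

theorem Assumption2.Y_ne_S (h : N.Assumption2) {i : N.ι} {j : ℕ} (hj : j ≤ N.L i) :
    N.Y i ≠ N.S i j := by
  obtain ⟨part, -, h_comp⟩ := h
  obtain ⟨α, -, hS, hY, -⟩ := h_comp i
  exact fun he ↦ hY (he ▸ hS j hj)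

theorem Assumption2.not_inter_of_reactsWith (h : N.Assumption2) {a b : σ}
    (hab : N.reactsWith a b) : ¬ N.inter a := by
  obtain ⟨i, j, ⟨rfl, -⟩ | ⟨-, rfl⟩⟩ := hab
  exacts [h.not_inter_Y i, h.not_inter_S j.isLt.le]

theorem Assumption2.not_inter_of_reactsTo (h : N.Assumption2) {u v : σ}
    (huv : N.reactsTo u v) : ¬ N.inter v := by
  obtain ⟨i, j, -, rfl | rfl | rfl⟩ := huv
  exacts [h.not_inter_Y i, h.not_inter_S j.isLt.le, h.not_inter_S j.isLt]

def HasReactingPair {ι : Type*} [LT ι] (N : A1Network σ) (z : ι → σ) : Prop :=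
  ∃ i₁ i₂, i₁ < i₂ ∧ N.reactsWith (z i₁) (z i₂)

theorem hasReactingPair_or_of_apply_ne_zero {ι : Type*} [Fintype ι] [LinearOrder ι]
    {z : ι → σ} {a p q : σ} (hpq : N.reactsWith p q) (hne : p ≠ q)
    (hp : (single a 1 + ∑ i, single (z i) 1 : σ →₀ ℕ) p ≠ 0)
    (hq : (single a 1 + ∑ i, single (z i) 1 : σ →₀ ℕ) q ≠ 0) :
    N.HasReactingPair z ∨ ∃ i₀, N.reactsWith a (z i₀) := by
  rcases eq_or_exists_of_single_add_sum_apply_ne_zero hp with rfl | ⟨i₁, rfl⟩ <;>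
    rcases eq_or_exists_of_single_add_sum_apply_ne_zero hq with rfl | ⟨i₂, rfl⟩
  · exact absurd rfl hne
  · exact .inr ⟨i₂, hpq⟩
  · exact .inr ⟨i₁, reactsWith_comm hpq⟩
  · rcases lt_or_gt_of_ne (ne_of_apply_ne z hne) with hlt | hlt
    exacts [.inl ⟨i₁, i₂, hlt, hpq⟩, .inl ⟨i₂, i₁, hlt, reactsWith_comm hpq⟩]

end

open Finset in
theorem exists_of_coeff_rhs_ne_zero [DecidableEq σ] {N : A1Network σ} {k : N.Param → ℝ}
    {w : σ} {n : σ →₀ ℕ} (h : coeff n (N.rhs k w) ≠ 0) :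
    ∃ i, ∃ j : Fin (N.L i),
      n = single (N.Y i) 1 + single (N.S i j) 1 ∨
      (n = single (N.U i ((j : ℕ) + 1)) 1 ∧
        (w = N.U i ((j : ℕ) + 1) ∨ N.reactsTo (N.U i ((j : ℕ) + 1)) w)) := by
  rw [rhs, coeff_sum] at h
  obtain ⟨i, -, hi⟩ := exists_ne_zero_of_sum_ne_zero h
  rw [coeff_sum] at hi
  obtain ⟨j, -, hj⟩ := exists_ne_zero_of_sum_ne_zero hi
  refine ⟨i, j, ?_⟩
  have hXX : (X (N.Y i) * X (N.S i j) : MvPolynomial σ ℝ) =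
      monomial (single (N.Y i) 1 + single (N.S i j) 1) 1 := by
    simp only [X, monomial_mul, mul_one]
  rw [hXX, coeff_add, coeff_add, coeff_C_mul, coeff_C_mul, coeff_C_mul, coeff_monomial,
    coeff_X] at hj
  by_cases hpair : single (N.Y i) 1 + single (N.S i j) 1 = n
  · exact .inl hpair.symm
  by_cases hU : single (N.U i ((j : ℕ) + 1)) 1 = n
  · refine .inr ⟨hU.symm, ?_⟩
    by_contra! hw
    obtain ⟨hwU, hto⟩ := hw
    have hY : N.Y i ≠ w := fun h ↦ hto ⟨i, j, rfl, .inl h.symm⟩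
    have hS : N.S i j ≠ w := fun h ↦ hto ⟨i, j, rfl, .inr (.inl h.symm)⟩
    have hS' : N.S i ((j : ℕ) + 1) ≠ w := fun h ↦ hto ⟨i, j, rfl, .inr (.inr h.symm)⟩
    simp [ind, hpair, hU, hY, hS, hS', Ne.symm hwU] at hj
  · simp [hpair, hU] at hj

variable [Fintype σ] [DecidableEq σ]

theorem deriv_zero (N : A1Network σ) (k : N.Param → ℝ) (x : σ) : N.deriv k 0 x = X x := rfl

theorem deriv_succ (N : A1Network σ) (k : N.Param → ℝ) (ℓ : ℕ) (x : σ) :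
    N.deriv k (ℓ + 1) x = lieD (N.rhs k) (N.deriv k ℓ x) := rfl

section

variable {N : A1Network σ} {k : N.Param → ℝ} {x : σ}
  {ι : Type*} [Fintype ι] [LinearOrder ι] [Nonempty ι] {z : ι → σ}

theorem hasReactingPair_or_reactsWith_of_coeff_deriv_ne_zero (h2 : N.Assumption2) {v : σ}
    (hv : ¬ N.inter v) (hz : ∀ i, ¬ N.inter (z i)) {ℓ : ℕ}
    (h : coeff (single v 1 + ∑ i, single (z i) 1) (N.deriv k ℓ x) ≠ 0) :
    N.HasReactingPair z ∨ ∃ i₀, N.reactsWith v (z i₀) := by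
  cases ℓ with
  | zero => exact absurd (coeff_single_add_sum_X v x z) (deriv_zero N k x ▸ h)
  | succ ℓ =>
    rw [deriv_succ] at h
    obtain ⟨w, d, n, -, hn, hm⟩ := exists_of_coeff_lieD_ne_zero h
    obtain ⟨i, j, hpair | ⟨hU, -⟩⟩ := exists_of_coeff_rhs_ne_zero hn
    · exact hasReactingPair_or_of_apply_ne_zero ⟨i, j, .inl ⟨rfl, rfl⟩⟩
        (h2.Y_ne_S j.isLt.le) (by simp [hm, hpair]) (by simp [hm, hpair])
    · have hUv :
          (single v 1 + ∑ i, single (z i) 1 : σ →₀ ℕ) (N.U i ((j : ℕ) + 1)) ≠ 0 := by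
        simp [hm, hU]
      rcases eq_or_exists_of_single_add_sum_apply_ne_zero hUv with he | ⟨i', he⟩
      exacts [absurd (he ▸ ⟨i, j, rfl⟩) hv, absurd (he ▸ ⟨i, j, rfl⟩) (hz i')]

theorem hasReactingPair_or_exists_reactsTo_of_coeff_deriv_ne_zero (h2 : N.Assumption2)
    {u : σ} (hu : N.inter u) (hz : ∀ i, ¬ N.inter (z i)) {ℓ : ℕ}
    (h : coeff (single u 1 + ∑ i, single (z i) 1) (N.deriv k ℓ x) ≠ 0) :
    N.HasReactingPair z ∨
      ∃ i₀, ∃ v, ¬ N.inter v ∧ N.reactsWith v (z i₀) ∧ N.reactsTo u v := by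
  induction ℓ with
  | zero => exact absurd (coeff_single_add_sum_X u x z) (deriv_zero N k x ▸ h)
  | succ ℓ ih =>
    rw [deriv_succ] at h
    obtain ⟨w, d, n, hd, hn, hm⟩ := exists_of_coeff_lieD_ne_zero h
    obtain ⟨i, j, hpair | ⟨hU, hw⟩⟩ := exists_of_coeff_rhs_ne_zero hn
    · refine (hasReactingPair_or_of_apply_ne_zero (a := u) ⟨i, j, .inl ⟨rfl, rfl⟩⟩
        (h2.Y_ne_S j.isLt.le) (by simp [hm, hpair]) (by simp [hm, hpair])).imp_right ?_
      rintro ⟨i₀, hu_react⟩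
      exact absurd hu (h2.not_inter_of_reactsWith hu_react)
    · have hUu : N.U i ((j : ℕ) + 1) = u := by
        have hUm :
            (single u 1 + ∑ i, single (z i) 1 : σ →₀ ℕ) (N.U i ((j : ℕ) + 1)) ≠ 0 := by
          simp [hm, hU]
        rcases eq_or_exists_of_single_add_sum_apply_ne_zero hUm with he | ⟨i', he⟩
        exacts [he, absurd (he ▸ ⟨i, j, rfl⟩) (hz i')]
      rw [hU, hUu, add_comm] at hm
      obtain rfl := (add_right_cancel hm).symm
      rcases hw with rfl | hto
      · exact ih (by rwa [hUu, add_comm] at hd)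
      · have hv := h2.not_inter_of_reactsTo hto
        rw [hUu] at hto
        rcases hasReactingPair_or_reactsWith_of_coeff_deriv_ne_zero h2 hv hz
          (by rwa [add_comm] at hd) with hpair | ⟨i₀, hv_react⟩
        exacts [.inl hpair, .inr ⟨i₀, w, hv, hv_react, hto⟩]

end

theorem intermediate_times_product_monomial_general
    (N : A1Network σ) (h2 : N.Assumption2)
    (k : N.Param → ℝ)
    (x u : σ) (hu : N.inter u)
    (M : ℕ) (hM : 1 ≤ M) (z : Fin M → σ) (hz : ∀ i, ¬ N.inter (z i))
    (ℓ : ℕ)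
    (happ : MvPolynomial.coeff
      (Finsupp.single u 1 + ∑ i, Finsupp.single (z i) 1) (N.deriv k ℓ x) ≠ 0) :
    (∃ i₁ i₂ : Fin M, i₁ < i₂ ∧ N.reactsWith (z i₁) (z i₂))
    ∨ (∃ i₀ : Fin M, ∃ v : σ, ¬ N.inter v ∧
        N.reactsWith v (z i₀) ∧ N.reactsTo u v) := by
  have : Nonempty (Fin M) := Fin.pos_iff_nonempty.mp hM
  exact hasReactingPair_or_exists_reactsTo_of_coeff_deriv_ne_zero h2 hu hz happ

/-- **Lemma.** For a network satisfying Assumptions 1 and 2, if a monomial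
`u · ∏_{i=1}^M z_i` with `M ≥ 1`, where `u` is an intermediate species and `x` and all
the `Z i` are non-intermediate species, appears in `x^{(ℓ)}` for some `ℓ ≥ 1`, then
either there exist `i₁ < i₂` with `Z i₁` reacting with `Z i₂`, or there exist `i₀` and a
non-intermediate species `V` reacting with `Z i₀` such that `u` reacts to a complex
containing `V`. -/
theorem intermediate_times_product_monomial
    (N : A1Network σ) (h1 : N.Assumption1) (h2 : N.Assumption2)
    (k : N.Param → ℝ) (hk : ∀ r, 0 < k r)
    (x u : σ) (hx : ¬ N.inter x) (hu : N.inter u)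
    (M : ℕ) (hM : 1 ≤ M) (z : Fin M → σ) (hz : ∀ i, ¬ N.inter (z i))
    (ℓ : ℕ) (hℓ : 1 ≤ ℓ)
    (happ : MvPolynomial.coeff
      (Finsupp.single u 1 + ∑ i, Finsupp.single (z i) 1) (N.deriv k ℓ x) ≠ 0) :
    (∃ i₁ i₂ : Fin M, i₁ < i₂ ∧ N.reactsWith (z i₁) (z i₂))
    ∨ (∃ i₀ : Fin M, ∃ v : σ, ¬ N.inter v ∧
        N.reactsWith v (z i₀) ∧ N.reactsTo u v) :=
  intermediate_times_product_monomial_general N h2 k x u hu M hM z hz ℓ happ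

end A1Network
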